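/- Fix d ≥ 1, m ≥ 1, an integer k ≥ 1 and n = km, and let the environment variables ω(i,y) and the m-tree environment copies ω^u(j,y) be i.i.d. standard Gaussian. Then for all paths x, x' ∈ Π_n: (i) 𝔼[H_n(x) H_n(x')] = Σ_{i=1}^n 1_{x_i = x'_i}; (ii) 𝔼[H_n^{m-tree}(x) H_n^{m-tree}(x')] = Σ_{l=0}^{k−1} (∏_{r=1}^{l} 1_{x_{rm} = x'_{rm}}) Σ_{j=1}^{m} 1_{x_{lm+j} = x'_{lm+j}}; (iii) 𝔼[H_n^{m-tree}(x) H_n^{m-tree}(x')] ≤ 𝔼[H_n(x) H_n(x')]; and (iv) 𝔼[H_n(x)^2] = 𝔼[H_n^{m-tree}(x)^2] = n. -/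

import Mathlib

open MeasureTheory ProbabilityTheory Real Finset

noncomputable section

/-- A nearest-neighbour step of the simple random walk on `ℤ^d`, encoded by a
coordinate direction and a sign. -/
def step (d : ℕ) (s : Fin d × Bool) : Fin d → ℤ :=
  fun j => if j = s.1 then (if s.2 then 1 else -1) else 0

/-- Position after `i` steps of the nearest-neighbour path (started at the origin)
with step sequence `s`.  Nearest-neighbour paths in `Π_n` (starting at `0`) are
identified with their step sequences `s : Fin n → Fin d × Bool`. -/
def pos {d n : ℕ} (s : Fin n → Fin d × Bool) (i : ℕ) : Fin d → ℤ :=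
  ∑ j ∈ Finset.univ.filter (fun j : Fin n => (j : ℕ) < i), step d (s j)

/-- The polymer energy `H_n(x) = ∑_{i=1}^n ω(i, x_i)`. -/
def polymerEnergy {Ω : Type*} {d : ℕ} (n : ℕ) (env : ℕ × (Fin d → ℤ) → Ω → ℝ)
    (s : Fin n → Fin d × Bool) (o : Ω) : ℝ :=
  ∑ i ∈ Finset.range n, env (i + 1, pos s (i + 1)) o

/-- The `(x_m, x_{2m}, …, x_{lm})` word indexing the environment block used by the
path `s` in the `l`-th block of the `m`-tree. -/
def treeWord {d n : ℕ} (m : ℕ) (s : Fin n → Fin d × Bool) (l : ℕ) : List (Fin d → ℤ) :=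
  List.ofFn (fun r : Fin l => pos s ((r + 1) * m))

/-- The `m`-tree energy `H_n^{m-tree}(x)`, for `n = k m`:
`∑_{l=0}^{k-1} ∑_{j=1}^{m} ω^{(x_m, …, x_{lm})}(j, x_{lm+j} − x_{lm})`. -/
def treeEnergy {Ω : Type*} {d : ℕ} (n m k : ℕ)
    (envT : List (Fin d → ℤ) × ℕ × (Fin d → ℤ) → Ω → ℝ)
    (s : Fin n → Fin d × Bool) (o : Ω) : ℝ :=
  ∑ l ∈ Finset.range k, ∑ j ∈ Finset.range m,
    envT (treeWord m s l, (j + 1, pos s (l * m + (j + 1)) - pos s (l * m))) o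

/-- An i.i.d. family with common law `ν`: measurable, jointly independent,
identically distributed. -/
def IID {Ω ι : Type*} [MeasurableSpace Ω] (μ : Measure Ω) (f : ι → Ω → ℝ) (ν : Measure ℝ) : Prop :=
  (∀ i, Measurable (f i)) ∧ iIndepFun f μ ∧ ∀ i, Measure.map (f i) μ = ν

/-!
Under an i.i.d. standard Gaussian environment the variables form an orthonormal family in `L²`,
so the covariance of two energies counts the environment variables read by both paths. Both the
polymer index `(i, x_i)` and the `m`-tree index `(x_m, …, x_{lm}; j, x_{lm+j} - x_{lm})` determine
the time step, so only equal times contribute; at time `lm + j` the two tree indices agree exactly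
when the paths agree at the times `m, 2m, …, lm` and at time `lm + j`. Dropping that product of
indicators gives the comparison with the polymer.
-/

open scoped NNReal

lemma integral_sq_gaussianReal_zero (v : ℝ≥0) : ∫ x, x ^ 2 ∂gaussianReal 0 v = v := by
  have h := variance_fun_id_gaussianReal (μ := 0) (v := v)
  rw [variance_eq_integral measurable_id'.aemeasurable] at h
  simpa using h

lemma integral_sum_mul_sum_of_orthonormal {Ω ι α β : Type*} [MeasurableSpace Ω]
    {μ : Measure Ω} {f : ι → Ω → ℝ} [DecidableEq ι] (hf : ∀ i, MemLp (f i) 2 μ)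
    (horth : ∀ i j, ∫ o, f i o * f j o ∂μ = if i = j then 1 else 0)
    (A : Finset α) (B : Finset β) (g : α → ι) (g' : β → ι) :
    ∫ o, (∑ a ∈ A, f (g a) o) * (∑ b ∈ B, f (g' b) o) ∂μ
      = ∑ a ∈ A, ∑ b ∈ B, if g a = g' b then 1 else 0 := by
  have hint (i j : ι) : Integrable (fun o => f i o * f j o) μ := (hf i).integrable_mul (hf j)
  simp_rw [sum_mul_sum]
  rw [integral_finsetSum A fun a _ => integrable_finsetSum B fun b _ => hint _ _]
  refine sum_congr rfl fun a _ => ?_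
  rw [integral_finsetSum B fun b _ => hint _ _]
  exact sum_congr rfl fun b _ => horth _ _

namespace IID

variable {Ω ι : Type*} [MeasurableSpace Ω] {μ : Measure Ω} {f : ι → Ω → ℝ} {ν : Measure ℝ}

lemma integral_comp (h : IID μ f ν) (i : ι) {g : ℝ → ℝ} (hg : AEStronglyMeasurable g ν) :
    ∫ o, g (f i o) ∂μ = ∫ x, g x ∂ν := by
  rw [← h.2.2 i] at hg ⊢
  exact (integral_map (h.1 i).aemeasurable hg).symm

lemma memLp (h : IID μ f ν) (hν : MemLp id 2 ν) (i : ι) : MemLp (f i) 2 μ := by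
  rw [← h.2.2 i] at hν
  exact (memLp_map_measure_iff hν.1 (h.1 i).aemeasurable).1 hν

lemma integral_mul_eq_ite [DecidableEq ι] (h : IID μ f ν)
    (hν : MemLp id 2 ν) (hmean : ∫ x, x ∂ν = 0) (hsq : ∫ x, x ^ 2 ∂ν = 1) (i j : ι) :
    ∫ o, f i o * f j o ∂μ = if i = j then 1 else 0 := by
  split_ifs with hij
  · subst hij
    simpa [← sq] using h.integral_comp i (g := fun x => x ^ 2) (by fun_prop) |>.trans hsq
  · have hprod := (h.2.1.indepFun hij).integral_mul_eq_mul_integral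
      (h.memLp hν i).aestronglyMeasurable (h.memLp hν j).aestronglyMeasurable
    have hmean' (i : ι) : ∫ o, f i o ∂μ = 0 :=
      (h.integral_comp i (g := id) aestronglyMeasurable_id).trans hmean
    simpa [hmean'] using hprod

lemma integral_sum_mul_sum_gaussianReal {α β : Type*} [DecidableEq ι]
    (h : IID μ f (gaussianReal 0 1)) (A : Finset α) (B : Finset β) (g : α → ι) (g' : β → ι) :
    ∫ o, (∑ a ∈ A, f (g a) o) * (∑ b ∈ B, f (g' b) o) ∂μ
      = ∑ a ∈ A, ∑ b ∈ B, if g a = g' b then 1 else 0 := by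
  have hν : MemLp id 2 (gaussianReal 0 1) := memLp_id_gaussianReal' 2 (by simp)
  refine integral_sum_mul_sum_of_orthonormal (h.memLp hν) (h.integral_mul_eq_ite hν ?_ ?_) A B g g'
  · simp
  · simpa using integral_sq_gaussianReal_zero 1

end IID

namespace Finset

lemma sum_sum_ite_eq_sum_ite_of_eq_imp {α ι M : Type*} [DecidableEq ι] [AddCommMonoidWithOne M]
    {A : Finset α} {g g' : α → ι} (h : ∀ a ∈ A, ∀ b ∈ A, g a = g' b → a = b) :
    ∑ a ∈ A, ∑ b ∈ A, (if g a = g' b then (1 : M) else 0)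
      = ∑ a ∈ A, if g a = g' a then 1 else 0 :=
  sum_congr rfl fun a ha =>
    sum_eq_single_of_mem a ha fun b hb hba => if_neg fun e => hba (h a ha b hb e).symm

lemma sum_range_mul_eq_sum_sum {M : Type*} [AddCommMonoid M] (F : ℕ → M) (k m : ℕ) :
    ∑ i ∈ range (k * m), F i = ∑ l ∈ range k, ∑ j ∈ range m, F (l * m + j) := by
  induction k with
  | zero => simp
  | succ k ih => rw [Nat.succ_mul, sum_range_add, ih, sum_range_succ]

lemma sum_mul_sum_le_sum_range_mul {R : Type*} [Semiring R] [PartialOrder R] [IsOrderedRing R]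
    {c F : ℕ → R} (hc : ∀ l, c l ≤ 1) (hF : ∀ i, 0 ≤ F i) (k m : ℕ) :
    ∑ l ∈ range k, c l * ∑ j ∈ range m, F (l * m + j) ≤ ∑ i ∈ range (k * m), F i := by
  rw [sum_range_mul_eq_sum_sum]
  exact sum_le_sum fun l _ => mul_le_of_le_one_left (sum_nonneg fun j _ => hF _) (hc l)

end Finset

section Paths

variable {d n : ℕ}

@[simp]
lemma pos_zero (s : Fin n → Fin d × Bool) : pos s 0 = 0 := by
  simp [pos]

@[simp]
lemma length_treeWord (m : ℕ) (s : Fin n → Fin d × Bool) (l : ℕ) :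
    (treeWord m s l).length = l := by
  simp [treeWord]

lemma treeWord_eq_treeWord_iff {m : ℕ} {s s' : Fin n → Fin d × Bool} {l : ℕ} :
    treeWord m s l = treeWord m s' l
      ↔ ∀ r ∈ range l, pos s ((r + 1) * m) = pos s' ((r + 1) * m) := by
  simp [treeWord, List.ofFn_inj, funext_iff, Fin.forall_iff]

lemma pos_mul_eq_of_treeWord_eq {m : ℕ} {s s' : Fin n → Fin d × Bool} {l : ℕ}
    (h : treeWord m s l = treeWord m s' l) : pos s (l * m) = pos s' (l * m) := by
  cases l with
  | zero => simp
  | succ r => exact treeWord_eq_treeWord_iff.1 h r (self_mem_range_succ r)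

/-- For `p = (l, j)`, the index `(u, j + 1, y)` of the variable `ω^u(j + 1, y)` of the `m`-tree
environment read by the path `s` at time `l * m + j + 1`. -/
def treeSite (m : ℕ) (s : Fin n → Fin d × Bool) (p : ℕ × ℕ) :
    List (Fin d → ℤ) × ℕ × (Fin d → ℤ) :=
  (treeWord m s p.1, (p.2 + 1, pos s (p.1 * m + (p.2 + 1)) - pos s (p.1 * m)))

lemma treeEnergy_eq_sum_treeSite {Ω : Type*} (m k : ℕ)
    (envT : List (Fin d → ℤ) × ℕ × (Fin d → ℤ) → Ω → ℝ) (s : Fin n → Fin d × Bool) (o : Ω) :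
    treeEnergy n m k envT s o = ∑ p ∈ range k ×ˢ range m, envT (treeSite m s p) o := by
  rw [treeEnergy, sum_product]
  rfl

lemma eq_of_treeSite_eq {m : ℕ} {s s' : Fin n → Fin d × Bool} {p q : ℕ × ℕ}
    (h : treeSite m s p = treeSite m s' q) : p = q := by
  simp only [treeSite, Prod.mk.injEq] at h
  have := congrArg List.length h.1
  simp only [length_treeWord] at this
  ext <;> omega

lemma treeSite_eq_treeSite_iff {m : ℕ} {s s' : Fin n → Fin d × Bool} {l j : ℕ} :
    treeSite m s (l, j) = treeSite m s' (l, j)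
      ↔ (∀ r ∈ range l, pos s ((r + 1) * m) = pos s' ((r + 1) * m))
        ∧ pos s (l * m + (j + 1)) = pos s' (l * m + (j + 1)) := by
  simp only [treeSite, Prod.mk.injEq, true_and, ← treeWord_eq_treeWord_iff]
  refine and_congr_right fun hw => ?_
  rw [pos_mul_eq_of_treeWord_eq hw, sub_left_inj]

end Paths

section Covariances

variable {Ω : Type*} [MeasurableSpace Ω] {μ : Measure Ω} {d n : ℕ}

lemma integral_polymerEnergy_mul {env : ℕ × (Fin d → ℤ) → Ω → ℝ}
    (henv : IID μ env (gaussianReal 0 1)) (s s' : Fin n → Fin d × Bool) :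
    ∫ o, polymerEnergy n env s o * polymerEnergy n env s' o ∂μ
      = ∑ i ∈ range n, if pos s (i + 1) = pos s' (i + 1) then (1 : ℝ) else 0 := by
  simp only [polymerEnergy]
  rw [henv.integral_sum_mul_sum_gaussianReal, sum_sum_ite_eq_sum_ite_of_eq_imp]
  · simp
  · intro i _ i' _ h
    simpa using congrArg Prod.fst h

lemma integral_treeEnergy_mul {envT : List (Fin d → ℤ) × ℕ × (Fin d → ℤ) → Ω → ℝ}
    (henvT : IID μ envT (gaussianReal 0 1)) (m k : ℕ) (s s' : Fin n → Fin d × Bool) :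
    ∫ o, treeEnergy n m k envT s o * treeEnergy n m k envT s' o ∂μ
      = ∑ l ∈ range k,
          (∏ r ∈ range l, if pos s ((r + 1) * m) = pos s' ((r + 1) * m) then (1 : ℝ) else 0) *
            ∑ j ∈ range m,
              if pos s (l * m + (j + 1)) = pos s' (l * m + (j + 1)) then (1 : ℝ) else 0 := by
  simp only [treeEnergy_eq_sum_treeSite]
  rw [henvT.integral_sum_mul_sum_gaussianReal,
    sum_sum_ite_eq_sum_ite_of_eq_imp fun _ _ _ _ => eq_of_treeSite_eq, sum_product]
  refine sum_congr rfl fun l _ => ?_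
  simp only [mul_sum, prod_boole, ite_zero_mul_ite_zero, one_mul, treeSite_eq_treeSite_iff]

end Covariances

theorem gaussian_energy_covariances_general
    {Ω : Type*} [MeasurableSpace Ω] (μ : Measure Ω)
    (d m k : ℕ) (n : ℕ) (hn : n = k * m)
    (env : ℕ × (Fin d → ℤ) → Ω → ℝ) (henv : IID μ env (gaussianReal 0 1))
    (envT : List (Fin d → ℤ) × ℕ × (Fin d → ℤ) → Ω → ℝ)
    (henvT : IID μ envT (gaussianReal 0 1)) :
    ∀ s s' : Fin n → Fin d × Bool,
      (∫ o, polymerEnergy n env s o * polymerEnergy n env s' o ∂μ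
          = ∑ i ∈ Finset.range n, if pos s (i + 1) = pos s' (i + 1) then (1 : ℝ) else 0)
      ∧ (∫ o, treeEnergy n m k envT s o * treeEnergy n m k envT s' o ∂μ
          = ∑ l ∈ Finset.range k,
              (∏ r ∈ Finset.range l,
                  if pos s ((r + 1) * m) = pos s' ((r + 1) * m) then (1 : ℝ) else 0) *
                ∑ j ∈ Finset.range m,
                  if pos s (l * m + (j + 1)) = pos s' (l * m + (j + 1)) then (1 : ℝ) else 0)
      ∧ (∫ o, treeEnergy n m k envT s o * treeEnergy n m k envT s' o ∂μ
          ≤ ∫ o, polymerEnergy n env s o * polymerEnergy n env s' o ∂μ)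
      ∧ (∫ o, polymerEnergy n env s o ^ 2 ∂μ = n)
      ∧ (∫ o, treeEnergy n m k envT s o ^ 2 ∂μ = n) := by
  intro s s'
  have hpoly := integral_polymerEnergy_mul (n := n) henv
  have htree := integral_treeEnergy_mul (n := n) henvT m k
  refine ⟨hpoly s s', htree s s', ?_, ?_, ?_⟩
  · have hle := sum_mul_sum_le_sum_range_mul (R := ℝ)
      (c := fun l => ∏ r ∈ range l, if pos s ((r + 1) * m) = pos s' ((r + 1) * m) then 1 else 0)
      (F := fun i => if pos s (i + 1) = pos s' (i + 1) then 1 else 0)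
      (fun l => prod_le_one (fun _ _ => by positivity) fun _ _ => ite_le_one le_rfl zero_le_one)
      (fun i => by positivity) k m
    rw [hpoly, htree]
    simpa only [add_assoc, ← hn] using hle
  · simp [sq, hpoly]
  · simp [sq, htree, hn]

/-- Covariance structure of the polymer and `m`-tree energies under i.i.d.
standard Gaussian environments: for all paths `x, x' ∈ Π_n` (encoded by step sequences),
(i) `𝔼[H_n(x) H_n(x')] = ∑_{i=1}^n 1_{x_i = x'_i}`;
(ii) `𝔼[H^{m-tree}(x) H^{m-tree}(x')]
       = ∑_{l=0}^{k−1} (∏_{r=1}^{l} 1_{x_{rm} = x'_{rm}}) ∑_{j=1}^{m} 1_{x_{lm+j} = x'_{lm+j}}`;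
(iii) `𝔼[H^{m-tree}(x) H^{m-tree}(x')] ≤ 𝔼[H_n(x) H_n(x')]`;
(iv) `𝔼[H_n(x)²] = 𝔼[H^{m-tree}(x)²] = n`. -/
theorem gaussian_energy_covariances
    {Ω : Type*} [MeasurableSpace Ω] (μ : Measure Ω) [IsProbabilityMeasure μ]
    (d m k : ℕ) (hd : 1 ≤ d) (hm : 1 ≤ m) (hk : 1 ≤ k) (n : ℕ) (hn : n = k * m)
    (env : ℕ × (Fin d → ℤ) → Ω → ℝ) (henv : IID μ env (gaussianReal 0 1))
    (envT : List (Fin d → ℤ) × ℕ × (Fin d → ℤ) → Ω → ℝ)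
    (henvT : IID μ envT (gaussianReal 0 1)) :
    ∀ s s' : Fin n → Fin d × Bool,
      (∫ o, polymerEnergy n env s o * polymerEnergy n env s' o ∂μ
          = ∑ i ∈ Finset.range n, if pos s (i + 1) = pos s' (i + 1) then (1 : ℝ) else 0)
      ∧ (∫ o, treeEnergy n m k envT s o * treeEnergy n m k envT s' o ∂μ
          = ∑ l ∈ Finset.range k,
              (∏ r ∈ Finset.range l,
                  if pos s ((r + 1) * m) = pos s' ((r + 1) * m) then (1 : ℝ) else 0) *
                ∑ j ∈ Finset.range m,
                  if pos s (l * m + (j + 1)) = pos s' (l * m + (j + 1)) then (1 : ℝ) else 0)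
      ∧ (∫ o, treeEnergy n m k envT s o * treeEnergy n m k envT s' o ∂μ
          ≤ ∫ o, polymerEnergy n env s o * polymerEnergy n env s' o ∂μ)
      ∧ (∫ o, polymerEnergy n env s o ^ 2 ∂μ = n)
      ∧ (∫ o, treeEnergy n m k envT s o ^ 2 ∂μ = n) :=
  gaussian_energy_covariances_general μ d m k n hn env henv envT henvT
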